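/- Let l be a prime, let Γ₀(l) ⊂ SL₂(ℤ_l) be the subgroup of matrices that are upper triangular modulo l, and let g = diag(l, 1) ∈ GL₂(ℚ_l), so that conjugation by g⁻¹ maps Γ₀(l) into SL₂(ℤ_l). Then there is no finite-index subgroup Γ' ⊂ Γ₀(l) that is normal in SL₂(ℤ_l) under both embeddings of Γ₀(l) into SL₂(ℤ_l): the standard inclusion and the embedding given by conjugation by g. -/

import Mathlib

/-!
Write `U m`, `L m` for the upper and lower unipotent matrices. Conjugation by the Weyl element
exchanges `U m` and `L (-m)`, so a normal subgroup of `SL₂` contains one iff it contains the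
other. Conjugation by `g = diag(l, 1)` sends `L (l m)` to `L m` and `U m` to `U (l m)`, and
every element of `Γ'' = g Γ' g⁻¹` has upper-right entry divisible by `l`. So if `U m ∈ Γ'`,
then `L (-m) ∈ Γ' ⊆ Γ₀(l)` gives `m = -l a`; then `L a`, hence `U (-a)`, lies in `Γ''`, which
gives `a = -l b` with `U b ∈ Γ'`. Iterating, `m` is divisible by every power of `l`, hence
`m = 0` by Krull's intersection theorem. This contradicts `U n = U 1 ^ n ∈ Γ'` for the index
`n = [SL₂(ℤ_l) : Γ']`.
-/

open Matrix

variable (l : ℕ) [Fact l.Prime]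

/-- `Γ₀(l) ⊂ SL₂(ℤ_l)`: the subgroup of matrices which are upper triangular modulo `l`,
that is, the preimage under reduction mod `l` of the standard Borel of `SL₂(𝔽_l)`. -/
def Gamma0Zl : Subgroup (Matrix.SpecialLinearGroup (Fin 2) ℤ_[l]) where
  carrier := {A | (l : ℤ_[l]) ∣ (A : Matrix (Fin 2) (Fin 2) ℤ_[l]) 1 0}
  one_mem' := by
    simp
  mul_mem' := by
    intro A B hA hB
    simp only [Set.mem_setOf_eq, Matrix.SpecialLinearGroup.coe_mul] at *
    rw [Matrix.mul_apply, Fin.sum_univ_two]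
    exact dvd_add (Dvd.dvd.mul_right hA _) (Dvd.dvd.mul_left hB _)
  inv_mem' := by
    intro A hA
    simp only [Set.mem_setOf_eq] at *
    rw [Matrix.SpecialLinearGroup.SL2_inv_expl]
    simpa using hA.neg_right

/-- The element `g = diag(l, 1)` of `GL₂(ℚ_l)`. -/
noncomputable def diagL : GL (Fin 2) ℚ_[l] :=
  ⟨!![(l : ℚ_[l]), 0; 0, 1], !![(l : ℚ_[l])⁻¹, 0; 0, 1],
    by
      have hl : (l : ℚ_[l]) ≠ 0 :=
        Nat.cast_ne_zero.mpr (Fact.out : l.Prime).ne_zero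
      rw [Matrix.mul_fin_two]
      simp [mul_inv_cancel₀ hl, Matrix.one_fin_two],
    by
      have hl : (l : ℚ_[l]) ≠ 0 :=
        Nat.cast_ne_zero.mpr (Fact.out : l.Prime).ne_zero
      rw [Matrix.mul_fin_two]
      simp [inv_mul_cancel₀ hl, Matrix.one_fin_two]⟩

/-- The natural embedding `SL₂(ℤ_l) → GL₂(ℚ_l)`. -/
noncomputable def slZlToGlQl : Matrix.SpecialLinearGroup (Fin 2) ℤ_[l] →* GL (Fin 2) ℚ_[l] :=
  Matrix.SpecialLinearGroup.toGL.comp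
    (Matrix.SpecialLinearGroup.map (PadicInt.Coe.ringHom (p := l)))

open scoped MatrixGroups

theorem eq_zero_of_forall_pow_dvd {R : Type*} [CommRing R] [IsNoetherianRing R] [IsLocalRing R]
    {a m : R} (ha : ¬IsUnit a) (h : ∀ k : ℕ, a ^ k ∣ m) : m = 0 := by
  have hkrull := Ideal.iInf_pow_eq_bot_of_isLocalRing (Ideal.span {a})
    (by rwa [Ne, Ideal.span_singleton_eq_top])
  rw [← Ideal.mem_bot, ← hkrull, Submodule.mem_iInf]
  intro k
  rw [Ideal.span_singleton_pow, Ideal.mem_span_singleton]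
  exact h k

theorem pow_dvd_of_forall_exists_eq_mul {R : Type*} [CommMonoid R] {P : R → Prop} {a : R}
    (h : ∀ m, P m → ∃ m', m = a * m' ∧ P m') (k : ℕ) {m : R} (hm : P m) :
    a ^ k ∣ m := by
  induction k generalizing m with
  | zero => exact (pow_zero a).symm ▸ one_dvd m
  | succ k ih =>
    obtain ⟨m', rfl, hm'⟩ := h m hm
    rw [pow_succ']
    exact mul_dvd_mul_left a (ih hm')

namespace SL2

variable {R : Type*} [CommRing R]

def upperUnipotent (m : R) : SL(2, R) := ⟨!![1, m; 0, 1], by simp⟩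

def lowerUnipotent (m : R) : SL(2, R) := ⟨!![1, 0; m, 1], by simp⟩

def weyl : SL(2, R) := ⟨!![0, -1; 1, 0], by simp⟩

@[simp]
theorem coe_upperUnipotent (m : R) : (upperUnipotent m : Matrix (Fin 2) (Fin 2) R) =
    !![1, m; 0, 1] :=
  rfl

@[simp]
theorem coe_lowerUnipotent (m : R) : (lowerUnipotent m : Matrix (Fin 2) (Fin 2) R) =
    !![1, 0; m, 1] :=
  rfl

@[simp]
theorem coe_weyl : ((weyl : SL(2, R)) : Matrix (Fin 2) (Fin 2) R) = !![0, -1; 1, 0] :=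
  rfl

theorem upperUnipotent_zero : upperUnipotent (0 : R) = 1 :=
  Subtype.ext (Matrix.one_fin_two).symm

theorem upperUnipotent_add (a b : R) :
    upperUnipotent (a + b) = upperUnipotent a * upperUnipotent b :=
  Subtype.ext <| by simp [add_comm]

theorem upperUnipotent_natCast (n : ℕ) : upperUnipotent (n : R) = upperUnipotent 1 ^ n := by
  induction n with
  | zero => rw [Nat.cast_zero, upperUnipotent_zero, pow_zero]
  | succ n ih => rw [Nat.cast_succ, upperUnipotent_add, ih, pow_succ]

theorem weyl_mul_upperUnipotent_mul_inv (m : R) :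
    weyl * upperUnipotent m * weyl⁻¹ = lowerUnipotent (-m) := by
  rw [mul_inv_eq_iff_eq_mul]
  exact Subtype.ext <| by
    simp only [Matrix.SpecialLinearGroup.coe_mul, coe_weyl, coe_upperUnipotent, coe_lowerUnipotent,
      Matrix.mul_fin_two]
    simp

theorem weyl_mul_lowerUnipotent_mul_inv (m : R) :
    weyl * lowerUnipotent m * weyl⁻¹ = upperUnipotent (-m) := by
  rw [mul_inv_eq_iff_eq_mul]
  exact Subtype.ext <| by
    simp only [Matrix.SpecialLinearGroup.coe_mul, coe_weyl, coe_upperUnipotent, coe_lowerUnipotent,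
      Matrix.mul_fin_two]
    simp

theorem lowerUnipotent_mem_of_normal {H : Subgroup SL(2, R)} (hH : H.Normal) {m : R}
    (hm : upperUnipotent m ∈ H) : lowerUnipotent (-m) ∈ H := by
  simpa only [weyl_mul_upperUnipotent_mul_inv] using hH.conj_mem _ hm weyl

theorem upperUnipotent_mem_of_normal {H : Subgroup SL(2, R)} (hH : H.Normal) {m : R}
    (hm : lowerUnipotent m ∈ H) : upperUnipotent (-m) ∈ H := by
  simpa only [weyl_mul_lowerUnipotent_mul_inv] using hH.conj_mem _ hm weyl

end SL2

open SL2

noncomputable def diagConj : SL(2, ℤ_[l]) →* GL (Fin 2) ℚ_[l] :=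
  (MulAut.conj (diagL l)).toMonoidHom.comp (slZlToGlQl l)

theorem coe_slZlToGlQl (x : SL(2, ℤ_[l])) :
    (slZlToGlQl l x : Matrix (Fin 2) (Fin 2) ℚ_[l]) =
      !![(x 0 0 : ℚ_[l]), x 0 1; x 1 0, x 1 1] :=
  Matrix.eta_fin_two _

theorem coe_diagConj (x : SL(2, ℤ_[l])) :
    (diagConj l x : Matrix (Fin 2) (Fin 2) ℚ_[l]) =
      !![(x 0 0 : ℚ_[l]), l * x 0 1; x 1 0 / l, x 1 1] := by
  have hl : (l : ℚ_[l]) ≠ 0 := Nat.cast_ne_zero.mpr (Fact.out : l.Prime).ne_zero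
  change !![(l : ℚ_[l]), 0; 0, 1] * (slZlToGlQl l x : Matrix (Fin 2) (Fin 2) ℚ_[l]) *
    !![(l : ℚ_[l])⁻¹, 0; 0, 1] = _
  rw [coe_slZlToGlQl, Matrix.mul_fin_two, Matrix.mul_fin_two]
  ext i j
  fin_cases i <;> fin_cases j <;> simp [div_eq_mul_inv, mul_comm (l : ℚ_[l]), hl]

theorem slZlToGlQl_injective : Function.Injective (slZlToGlQl l) := fun _ _ h ↦
  Subtype.ext <| Matrix.ext fun i j ↦ PadicInt.ext
    (congrArg (fun A : GL (Fin 2) ℚ_[l] ↦ (A : Matrix (Fin 2) (Fin 2) ℚ_[l]) i j) h)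

theorem diagConj_injective : Function.Injective (diagConj l) :=
  (MulAut.conj (diagL l)).injective.comp (slZlToGlQl_injective l)

theorem diagConj_lowerUnipotent (m : ℤ_[l]) :
    diagConj l (lowerUnipotent (l * m)) = slZlToGlQl l (lowerUnipotent m) := by
  have hl : (l : ℚ_[l]) ≠ 0 := Nat.cast_ne_zero.mpr (Fact.out : l.Prime).ne_zero
  ext i j
  fin_cases i <;> fin_cases j <;> simp [coe_diagConj, coe_slZlToGlQl, hl]

theorem diagConj_upperUnipotent (m : ℤ_[l]) :
    diagConj l (upperUnipotent m) = slZlToGlQl l (upperUnipotent (l * m)) := by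
  ext i j
  fin_cases i <;> fin_cases j <;> simp [coe_diagConj, coe_slZlToGlQl]

theorem lowerUnipotent_mem_Gamma0Zl_iff {m : ℤ_[l]} :
    lowerUnipotent m ∈ Gamma0Zl l ↔ (l : ℤ_[l]) ∣ m :=
  Iff.rfl

theorem dvd_apply_zero_one_of_slZlToGlQl_eq_diagConj {x y : SL(2, ℤ_[l])}
    (h : slZlToGlQl l y = diagConj l x) : (l : ℤ_[l]) ∣ y 0 1 :=
  ⟨x 0 1, PadicInt.ext <| by
    simpa [coe_diagConj, coe_slZlToGlQl] using
      congrArg (fun A : GL (Fin 2) ℚ_[l] ↦ (A : Matrix (Fin 2) (Fin 2) ℚ_[l]) 0 1) h⟩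

section

variable {l} {Γ' Γ'' : Subgroup SL(2, ℤ_[l])}
  (hmap : Γ''.map (slZlToGlQl l) = Γ'.map (diagConj l))
include hmap

theorem lowerUnipotent_mem_of_mul_mem {m : ℤ_[l]} (hm : lowerUnipotent (l * m) ∈ Γ') :
    lowerUnipotent m ∈ Γ'' := by
  rw [← Subgroup.mem_map_iff_mem (slZlToGlQl_injective l), hmap, ← diagConj_lowerUnipotent]
  exact Subgroup.mem_map_of_mem _ hm

theorem upperUnipotent_mem_of_mul_mem {m : ℤ_[l]} (hm : upperUnipotent (l * m) ∈ Γ'') :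
    upperUnipotent m ∈ Γ' := by
  rw [← Subgroup.mem_map_iff_mem (diagConj_injective l), diagConj_upperUnipotent, ← hmap]
  exact Subgroup.mem_map_of_mem _ hm

theorem dvd_apply_zero_one_of_mem {y : SL(2, ℤ_[l])} (hy : y ∈ Γ'') :
    (l : ℤ_[l]) ∣ y 0 1 := by
  obtain ⟨x, -, hx⟩ : slZlToGlQl l y ∈ Γ'.map (diagConj l) :=
    hmap ▸ Subgroup.mem_map_of_mem _ hy
  exact dvd_apply_zero_one_of_slZlToGlQl_eq_diagConj l hx.symm

theorem exists_eq_sq_mul_of_upperUnipotent_mem (hΓ' : Γ' ≤ Gamma0Zl l) (hΓ'n : Γ'.Normal)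
    (hΓ''n : Γ''.Normal) {m : ℤ_[l]} (hm : upperUnipotent m ∈ Γ') :
    ∃ m', m = l ^ 2 * m' ∧ upperUnipotent m' ∈ Γ' := by
  have hL : lowerUnipotent (-m) ∈ Γ' := lowerUnipotent_mem_of_normal hΓ'n hm
  obtain ⟨a, ha⟩ := (lowerUnipotent_mem_Gamma0Zl_iff l).mp (hΓ' hL)
  rw [ha] at hL
  have hU : upperUnipotent (-a) ∈ Γ'' :=
    upperUnipotent_mem_of_normal hΓ''n (lowerUnipotent_mem_of_mul_mem hmap hL)
  obtain ⟨b, hb⟩ : (l : ℤ_[l]) ∣ -a := by simpa using dvd_apply_zero_one_of_mem hmap hU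
  rw [hb] at hU
  refine ⟨b, ?_, upperUnipotent_mem_of_mul_mem hmap hU⟩
  linear_combination -ha + (l : ℤ_[l]) * hb

theorem eq_zero_of_upperUnipotent_mem (hΓ' : Γ' ≤ Gamma0Zl l) (hΓ'n : Γ'.Normal)
    (hΓ''n : Γ''.Normal) {m : ℤ_[l]} (hm : upperUnipotent m ∈ Γ') : m = 0 := by
  have hl : ¬IsUnit ((l : ℤ_[l]) ^ 2) := by
    rw [isUnit_pow_iff two_ne_zero]
    exact PadicInt.p_nonunit
  exact eq_zero_of_forall_pow_dvd hl fun k ↦ pow_dvd_of_forall_exists_eq_mul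
    (P := fun m ↦ upperUnipotent m ∈ Γ')
    (fun _ ↦ exists_eq_sq_mul_of_upperUnipotent_mem hmap hΓ' hΓ'n hΓ''n) k hm

end

/-- There is no finite-index subgroup `Γ' ⊆ Γ₀(l)` such that both `Γ'` and its conjugate
`g Γ' g⁻¹` (with `g = diag(l,1)`, the conjugate again consisting of `l`-integral matrices
of determinant one) are normal in `SL₂(ℤ_l)`. -/
theorem no_finite_index_subgroup_normal_under_both_embeddings :
    ¬ ∃ Γ' : Subgroup (Matrix.SpecialLinearGroup (Fin 2) ℤ_[l]),
        Γ' ≤ Gamma0Zl l ∧ Γ'.FiniteIndex ∧ Γ'.Normal ∧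
        ∃ Γ'' : Subgroup (Matrix.SpecialLinearGroup (Fin 2) ℤ_[l]),
          Γ''.Normal ∧
          Γ''.map (slZlToGlQl l) =
            (Γ'.map (slZlToGlQl l)).map (MulAut.conj (diagL l)).toMonoidHom := by
  rintro ⟨Γ', hΓ', hfin, hΓ'n, Γ'', hΓ''n, hmap⟩
  rw [Subgroup.map_map] at hmap
  have hN : upperUnipotent (Γ'.index : ℤ_[l]) ∈ Γ' := by
    rw [upperUnipotent_natCast]
    exact Γ'.pow_index_mem _
  have hN0 := eq_zero_of_upperUnipotent_mem hmap hΓ' hΓ'n hΓ''n hN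
  exact hfin.index_ne_zero (by exact_mod_cast hN0)
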